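/- Assume Conjectures 1(2) and 2. Let k and k' be two fields of characteristic p. If for every n ≥ 1 every strong Keller map in ME_n(k) is invertible over k, then for every n ≥ 1 every strong Keller map in ME_n(k') is invertible over k'. -/
import Mathlib


open MvPolynomial

noncomputable section

/-- The total degree `|α|` of a multi-index `α`. -/
def mdeg {n : ℕ} (α : Fin n →₀ ℕ) : ℕ := α.sum fun _ e => e

/-- The determinant of the Jacobian matrix `(∂F_i/∂x_j)` of a polynomial endomorphism. -/
def jacDet {n : ℕ} {R : Type*} [CommRing R] (F : Fin n → MvPolynomial (Fin n) R) :
    MvPolynomial (Fin n) R :=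
  (Matrix.of fun i j => MvPolynomial.pderiv j (F i)).det

/-- `F` has degree at most `d`. -/
def DegLE {n : ℕ} {R : Type*} [CommRing R] (F : Fin n → MvPolynomial (Fin n) R) (d : ℕ) : Prop :=
  ∀ i, (F i).totalDegree ≤ d

/-- `F` has affine part the identity: `F_i = x_i + (terms of degree ≥ 2)`. -/
def AffinePartId {n : ℕ} {R : Type*} [CommRing R] (F : Fin n → MvPolynomial (Fin n) R) : Prop :=
  ∀ (i : Fin n) (α : Fin n →₀ ℕ), mdeg α ≤ 1 →
    MvPolynomial.coeff α (F i) = MvPolynomial.coeff α (MvPolynomial.X i : MvPolynomial (Fin n) R)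

/-- `F` is an invertible polynomial map: there is `G` with `F∘G = G∘F = id`. -/
def IsInvertible {n : ℕ} {R : Type*} [CommRing R] (F : Fin n → MvPolynomial (Fin n) R) : Prop :=
  ∃ G : Fin n → MvPolynomial (Fin n) R,
    (∀ i, MvPolynomial.bind₁ G (F i) = MvPolynomial.X i) ∧
    (∀ i, MvPolynomial.bind₁ F (G i) = MvPolynomial.X i)

/-- Index type of the universal coefficients `c_{i,α}`, `1 ≤ i ≤ n`, `2 ≤ |α| ≤ d`. -/
abbrev Idx (n d : ℕ) : Type := Fin n × {α : Fin n →₀ ℕ // 2 ≤ mdeg α ∧ mdeg α ≤ d}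

/-- The finite set of multi-indices `α` with `2 ≤ |α| ≤ d`. -/
def midxSet (n d : ℕ) : Finset (Fin n →₀ ℕ) :=
  (Finset.Iic (Finsupp.equivFunOnFinite.symm fun _ : Fin n => d)).filter
    fun α => 2 ≤ mdeg α ∧ mdeg α ≤ d

/-- The universal degree-`d` endomorphism with affine part identity, written over
`C_{ℤ,d} = ℤ[c_{i,α}]`. -/
def univFZ (n d : ℕ) : Fin n → MvPolynomial (Fin n) (MvPolynomial (Idx n d) ℤ) :=
  fun i => MvPolynomial.X i +
    ∑ α ∈ (midxSet n d).attach,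
      MvPolynomial.monomial (α : Fin n →₀ ℕ)
        (MvPolynomial.X (⟨i, ⟨α.1, by
          have h := α.2
          simp only [midxSet, Finset.mem_filter] at h
          exact h.2⟩⟩ : Idx n d))

/-- The coefficients `E_β ∈ C_{ℤ,d}` of `det(Jac(F[d])) − 1 = Σ_β E_β x^β`. -/
def Ecoef (n d : ℕ) (β : Fin n →₀ ℕ) : MvPolynomial (Idx n d) ℤ :=
  MvPolynomial.coeff β (jacDet (univFZ n d) - 1)

/-- The inclusion `C_{ℤ,d} → C_{ℚ,d}`. -/
def toQ (n d : ℕ) : MvPolynomial (Idx n d) ℤ →+* MvPolynomial (Idx n d) ℚ :=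
  MvPolynomial.map (Int.castRingHom ℚ)

/-- The ideal `I_ℚ^d ⊆ C_{ℚ,d}` generated by the coefficients `E_β`. -/
def Iqd (n d : ℕ) : Ideal (MvPolynomial (Idx n d) ℚ) :=
  Ideal.span (Set.range fun β : Fin n →₀ ℕ => toQ n d (Ecoef n d β))

/-- `J_ℤ^d := rad(I_ℚ^d) ∩ C_{ℤ,d}` as the contraction of the radical to `C_{ℤ,d}`. -/
def Jzd (n d : ℕ) : Ideal (MvPolynomial (Idx n d) ℤ) :=
  Ideal.comap (toQ n d) (Iqd n d).radical

/-- `ψ_F : C_{ℤ,d} → R`, evaluating `c_{i,α}` at the coefficient of `x^α` in `F_i`. -/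
def psi {n : ℕ} (d : ℕ) {R : Type*} [CommRing R] (F : Fin n → MvPolynomial (Fin n) R) :
    MvPolynomial (Idx n d) ℤ →+* R :=
  MvPolynomial.eval₂Hom (Int.castRingHom R) fun v => MvPolynomial.coeff v.2.1 (F v.1)

/-- `F` is a strong Keller map (w.r.t. degree bound `d`): `ψ_F` vanishes on `J_ℤ^d`. -/
def IsSKE (n d : ℕ) {R : Type*} [CommRing R] (F : Fin n → MvPolynomial (Fin n) R) : Prop :=
  ∀ Q ∈ Jzd n d, psi d F Q = 0

/-- `F` is a strong Keller map: for some degree bound `d ≥ 2` of `F`,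
`ψ_F` vanishes on `J_ℤ^d`. -/
def IsSKEAll (n : ℕ) {R : Type*} [CommRing R] (F : Fin n → MvPolynomial (Fin n) R) : Prop :=
  ∃ d, 2 ≤ d ∧ DegLE F d ∧ IsSKE n d F


/-- **Conjecture 1(1).** For every ℤ-algebra `R`, field `k` and surjective `τ : R → k`,
every invertible polynomial map over `k` with Jacobian determinant 1 lifts along `π` to an
invertible polynomial map over `R` with Jacobian determinant 1. -/
def Conj1_1 : Prop :=
  ∀ (n : ℕ), 1 ≤ n →
  ∀ (R : Type) [CommRing R], ∀ (k : Type) [Field k],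
  ∀ (τ : R →+* k), Function.Surjective τ →
  ∀ f : Fin n → MvPolynomial (Fin n) k, IsInvertible f → jacDet f = 1 →
    ∃ F : Fin n → MvPolynomial (Fin n) R, IsInvertible F ∧ jacDet F = 1 ∧
      ∀ i, MvPolynomial.map τ (F i) = f i

/-- **Conjecture 1(2).** For every ℤ-algebra `R`, field `k` and surjective `τ : R → k`,
every Keller map `F` over `R` whose image `π(F)` is invertible over `k` with Jacobian
determinant 1 is itself invertible over `R`. -/
def Conj1_2 : Prop :=
  ∀ (n : ℕ), 1 ≤ n →
  ∀ (R : Type) [CommRing R], ∀ (k : Type) [Field k],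
  ∀ (τ : R →+* k), Function.Surjective τ →
  ∀ F : Fin n → MvPolynomial (Fin n) R, jacDet F = 1 →
    IsInvertible (fun i => MvPolynomial.map τ (F i)) →
    jacDet (fun i => MvPolynomial.map τ (F i)) = 1 →
    IsInvertible F

/-- **Conjecture 2.** For every ℤ-algebra `R`, field `k` of characteristic `p`, and
surjective `τ : R → k`, every strong Keller map over `k` with affine part identity is the
image under `π` of a polynomial map over `R` with affine part identity and Jacobian
determinant 1. -/
def Conj2 : Prop :=
  ∀ (n : ℕ), 1 ≤ n →
  ∀ (R : Type) [CommRing R], ∀ (k : Type) [Field k], ∀ (p : ℕ), p.Prime → CharP k p →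
  ∀ (τ : R →+* k), Function.Surjective τ →
  ∀ f : Fin n → MvPolynomial (Fin n) k, AffinePartId f → IsSKEAll n f →
    ∃ F : Fin n → MvPolynomial (Fin n) R, AffinePartId F ∧ jacDet F = 1 ∧
      ∀ i, MvPolynomial.map τ (F i) = f i


section Aux

open MvPolynomial

variable {n d : ℕ} {R S : Type*} [CommRing R] [CommRing S]

lemma mdeg_single_one (i : Fin n) : mdeg (Finsupp.single i 1) = 1 := by
  simp [mdeg]

lemma apply_le_mdeg (γ : Fin n →₀ ℕ) (j : Fin n) : γ j ≤ mdeg γ := by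
  unfold mdeg
  rw [Finsupp.sum]
  by_cases h : j ∈ γ.support
  · exact Finset.single_le_sum (fun _ _ => Nat.zero_le _) h
  · simp [Finsupp.notMem_support_iff.mp h]

lemma mem_midxSet_of {γ : Fin n →₀ ℕ} (h2 : 2 ≤ mdeg γ) (hd : mdeg γ ≤ d) :
    γ ∈ midxSet n d := by
  refine Finset.mem_filter.mpr ⟨Finset.mem_Iic.mpr ?_, h2, hd⟩
  intro j
  simpa using (apply_le_mdeg γ j).trans hd

lemma mdeg_eq_sum (γ : Fin n →₀ ℕ) : mdeg γ = ∑ j ∈ γ.support, γ j := rfl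

lemma coeff_univFZ (i : Fin n) (γ : Fin n →₀ ℕ) :
    MvPolynomial.coeff γ (univFZ n d i) =
      (if Finsupp.single i 1 = γ then 1 else 0) +
      (if h : γ ∈ midxSet n d then
        MvPolynomial.X (⟨i, ⟨γ, (Finset.mem_filter.mp h).2⟩⟩ : Idx n d) else 0) := by
  unfold univFZ
  rw [coeff_add, coeff_X', coeff_sum]
  congr 1
  split_ifs with h
  · rw [Finset.sum_eq_single_of_mem ⟨γ, h⟩ (Finset.mem_attach _ _)]
    · simp [coeff_monomial]
    · intro b _ hb
      rw [coeff_monomial, if_neg]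
      exact fun e => hb (Subtype.ext e)
  · apply Finset.sum_eq_zero
    intro b _
    rw [coeff_monomial, if_neg]
    exact fun e => h (e ▸ b.2)

lemma map_psi_univFZ {F : Fin n → MvPolynomial (Fin n) R}
    (hA : AffinePartId F) (hD : DegLE F d) (i : Fin n) :
    MvPolynomial.map (psi d F) (univFZ n d i) = F i := by
  ext γ
  rw [coeff_map, coeff_univFZ]
  rcases le_or_gt (mdeg γ) 1 with h1 | h1
  · have hγ : γ ∉ midxSet n d := by
      intro h
      have := (Finset.mem_filter.mp h).2.1
      omega
    rw [dif_neg hγ, add_zero, hA i γ h1, coeff_X']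
    split_ifs <;> simp
  · have hne : ¬ (Finsupp.single i 1 = γ) := by
      intro e
      have h := mdeg_single_one (n := n) i
      rw [e] at h
      omega
    rw [if_neg hne]
    rcases le_or_gt (mdeg γ) d with h2 | h2
    · rw [dif_pos (mem_midxSet_of h1 h2), zero_add]
      simp [psi]
    · have hγ : γ ∉ midxSet n d := by
        intro h
        have := (Finset.mem_filter.mp h).2.2
        omega
      rw [dif_neg hγ, add_zero, map_zero]
      symm
      apply coeff_eq_zero_of_totalDegree_lt
      calc (F i).totalDegree ≤ d := hD i
        _ < mdeg γ := h2
        _ = ∑ j ∈ γ.support, γ j := mdeg_eq_sum γ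

lemma jacDet_map (f : R →+* S) (F : Fin n → MvPolynomial (Fin n) R) :
    jacDet (fun i => MvPolynomial.map f (F i)) = MvPolynomial.map f (jacDet F) := by
  unfold jacDet
  rw [RingHom.map_det]
  congr 1
  ext i j
  simp [pderiv_map]

lemma psi_Ecoef_eq_zero {F : Fin n → MvPolynomial (Fin n) R}
    (hA : AffinePartId F) (hD : DegLE F d) (hK : jacDet F = 1) (β : Fin n →₀ ℕ) :
    psi d F (Ecoef n d β) = 0 := by
  unfold Ecoef
  rw [← coeff_map, map_sub, map_one, ← jacDet_map]
  have hFe : (fun i => MvPolynomial.map (psi d F) (univFZ n d i)) = F :=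
    funext (map_psi_univFZ hA hD)
  rw [hFe, hK, sub_self, coeff_zero]

lemma psi_comp_map (τ : R →+* S) (F : Fin n → MvPolynomial (Fin n) R) :
    psi d (fun i => MvPolynomial.map τ (F i)) = τ.comp (psi d F) := by
  apply MvPolynomial.ringHom_ext
  · intro a
    simp [psi]
  · intro v
    simp [psi, coeff_map]

lemma affinePartId_map (τ : R →+* S) {F : Fin n → MvPolynomial (Fin n) R}
    (hA : AffinePartId F) : AffinePartId (fun i => MvPolynomial.map τ (F i)) := by
  intro i α hα
  simp only [coeff_map]
  rw [hA i α hα, coeff_X', coeff_X']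
  split_ifs <;> simp

lemma totalDegree_map_le' (τ : R →+* S) {σ : Type*} (p : MvPolynomial σ R) :
    (MvPolynomial.map τ p).totalDegree ≤ p.totalDegree :=
  Finset.sup_mono (MvPolynomial.support_map_subset _ _)

lemma isInvertible_map (τ : R →+* S) {F : Fin n → MvPolynomial (Fin n) R}
    (h : IsInvertible F) : IsInvertible (fun i => MvPolynomial.map τ (F i)) := by
  obtain ⟨G, h1, h2⟩ := h
  refine ⟨fun i => MvPolynomial.map τ (G i), fun i => ?_, fun i => ?_⟩
  · rw [← map_bind₁, h1 i, map_X]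
  · rw [← map_bind₁, h2 i, map_X]

lemma isSKE_of_jacDet_one {ι : Type*} {F : Fin n → MvPolynomial (Fin n) (MvPolynomial ι ℤ)}
    (hA : AffinePartId F) (hD : DegLE F d) (hK : jacDet F = 1) :
    IsSKE n d F := by
  intro Q hQ
  set ι' : MvPolynomial ι ℤ →+* MvPolynomial ι ℚ :=
    MvPolynomial.map (Int.castRingHom ℚ) with hι'
  set Fq : Fin n → MvPolynomial (Fin n) (MvPolynomial ι ℚ) :=
    fun i => MvPolynomial.map ι' (F i) with hFq
  set ψ' : MvPolynomial (Idx n d) ℚ →+* MvPolynomial ι ℚ :=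
    MvPolynomial.eval₂Hom (algebraMap ℚ _) (fun v => MvPolynomial.coeff v.2.1 (Fq v.1)) with hψ'
  have hcomp : ψ'.comp (toQ n d) = ι'.comp (psi d F) := by
    apply MvPolynomial.ringHom_ext
    · intro a
      simp [toQ, psi, hψ', hι', algebraMap_eq]
    · intro v
      simp [toQ, psi, hψ', hFq, coeff_map]
  have hgen : ∀ β, ψ' (toQ n d (Ecoef n d β)) = 0 := by
    intro β
    have h1 : ψ' (toQ n d (Ecoef n d β)) = ι' (psi d F (Ecoef n d β)) := by
      rw [← RingHom.comp_apply, hcomp, RingHom.comp_apply]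
    rw [h1, psi_Ecoef_eq_zero hA hD hK, map_zero]
  have hI : Iqd n d ≤ RingHom.ker ψ' := by
    rw [Iqd, Ideal.span_le]
    rintro _ ⟨β, rfl⟩
    exact hgen β
  have hrad : ∀ x ∈ (Iqd n d).radical, ψ' x = 0 := by
    intro x hx
    obtain ⟨m, hm⟩ := hx
    have hpow : ψ' x ^ m = 0 := by
      rw [← map_pow]
      exact hI hm
    rcases Nat.eq_zero_or_pos m with rfl | hm0
    · exact absurd hpow (by simp)
    · exact pow_eq_zero_iff hm0.ne' |>.mp hpow
  have h0 : ι' (psi d F Q) = 0 := by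
    rw [← RingHom.comp_apply, ← hcomp, RingHom.comp_apply]
    exact hrad _ (Ideal.mem_comap.mp hQ)
  have hinj : Function.Injective ι' :=
    MvPolynomial.map_injective _ Int.cast_injective
  exact hinj (by rw [h0, map_zero])

end Aux

/-- Assuming Conjectures 1(2) and 2: if every strong Keller map over a
field `k` of characteristic `p` is invertible (for every n ≥ 1), the same holds over any
other field `k'` of characteristic `p`. -/
theorem jc_transfers_between_charP_fields (h12 : Conj1_2) (h2 : Conj2)
    (p : ℕ) (hp : p.Prime)
    (k k' : Type) [Field k] [Field k'] [CharP k p] [CharP k' p]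
    (H : ∀ (n : ℕ), 1 ≤ n → ∀ F : Fin n → MvPolynomial (Fin n) k,
      AffinePartId F → IsSKEAll n F → IsInvertible F) :
    ∀ (n : ℕ), 1 ≤ n → ∀ F : Fin n → MvPolynomial (Fin n) k',
      AffinePartId F → IsSKEAll n F → IsInvertible F := by
  intro n hn F hA hS
  classical
  set R := MvPolynomial (k ⊕ k') ℤ with hR
  let τ' : R →+* k' :=
    MvPolynomial.eval₂Hom (Int.castRingHom k') (Sum.elim (fun _ => 0) id)
  have hτ' : Function.Surjective τ' := fun c => ⟨MvPolynomial.X (Sum.inr c), by rw [MvPolynomial.eval₂Hom_X']; rfl⟩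
  obtain ⟨Ft, hAt, hKt, hmapt⟩ := h2 n hn R k' p hp inferInstance τ' hτ' F hA hS
  let σ : R →+* k :=
    MvPolynomial.eval₂Hom (Int.castRingHom k) (Sum.elim id (fun _ => 0))
  have hσ : Function.Surjective σ := fun c => ⟨MvPolynomial.X (Sum.inl c), by rw [MvPolynomial.eval₂Hom_X']; rfl⟩
  set d : ℕ := max 2 (Finset.univ.sup fun i => (Ft i).totalDegree) with hd
  have hd2 : 2 ≤ d := le_max_left _ _
  have hDt : DegLE Ft d := fun i => by
    rw [hd]
    exact le_trans (Finset.le_sup (f := fun i => (Ft i).totalDegree) (Finset.mem_univ i)) (le_max_right 2 _)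
  have hSKEt : IsSKE n d Ft := isSKE_of_jacDet_one hAt hDt hKt
  have hAG : AffinePartId (fun i => MvPolynomial.map σ (Ft i)) := affinePartId_map σ hAt
  have hDG : DegLE (fun i => MvPolynomial.map σ (Ft i)) d := fun i =>
    (totalDegree_map_le' σ (Ft i)).trans (hDt i)
  have hSG : IsSKE n d (fun i => MvPolynomial.map σ (Ft i)) := by
    intro Q hQ
    rw [psi_comp_map, RingHom.comp_apply, hSKEt Q hQ, map_zero]
  have hGinv : IsInvertible (fun i => MvPolynomial.map σ (Ft i)) :=
    H n hn _ hAG ⟨d, hd2, hDG, hSG⟩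
  have hKG : jacDet (fun i => MvPolynomial.map σ (Ft i)) = 1 := by
    rw [jacDet_map, hKt, map_one]
  have hFtInv : IsInvertible Ft := h12 n hn R k σ hσ Ft hKt hGinv hKG
  have hinv' : IsInvertible (fun i => MvPolynomial.map τ' (Ft i)) := isInvertible_map τ' hFtInv
  have heq : (fun i => MvPolynomial.map τ' (Ft i)) = F := funext hmapt
  rwa [heq] at hinv'


end
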